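/- Drazin inverse via the Moore–Penrose inverse: let A be an n×n quaternion matrix, k, l natural numbers with k ≤ l, X a k-Drazin inverse of A, and Z a matrix satisfying the four Penrose equations for A^(2l+1). Then X = A^l * Z * A^l. -/
import Mathlib


open Matrix

notation "ℍ" => Quaternion ℝ

/-- `X` is a `k`-Drazin inverse of the square quaternion matrix `A`. -/
def IsDrazinInverse {n : ℕ} (A X : Matrix (Fin n) (Fin n) ℍ) (k : ℕ) : Prop :=
  A ^ k * X * A = A ^ k ∧ X * A * X = X ∧ A * X = X * A

/-- `Z` satisfies the four Penrose equations for the quaternion matrix `B`. -/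
def SatisfiesPenrose {n : ℕ} (B Z : Matrix (Fin n) (Fin n) ℍ) : Prop :=
  B * Z * B = B ∧ Z * B * Z = Z ∧ (B * Z)ᴴ = B * Z ∧ (Z * B)ᴴ = Z * B

/-- The Drazin inverse via the Moore–Penrose inverse: if `X` is a `k`-Drazin inverse of `A`,
`k ≤ l`, and `Z` satisfies the Penrose equations for `A ^ (2 * l + 1)`, then
`X = A ^ l * Z * A ^ l`. -/
theorem drazin_eq_pow_mul_pinv_mul_pow {n : ℕ} (A X Z : Matrix (Fin n) (Fin n) ℍ)
    (k l : ℕ) (hkl : k ≤ l) (hX : IsDrazinInverse A X k)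
    (hZ : SatisfiesPenrose (A ^ (2 * l + 1)) Z) :
    X = A ^ l * Z * A ^ l := by
  obtain ⟨hk, hXX, hc⟩ := hX
  obtain ⟨hB, -, -, -⟩ := hZ
  have c : Commute A X := hc
  -- A^m * X^(m+1) = X
  have hP : ∀ m : ℕ, A ^ m * X ^ (m + 1) = X := by
    intro m
    induction m with
    | zero => simp
    | succ m ih =>
      have : A ^ (m + 1) * X ^ (m + 2) = A * (A ^ m * X ^ (m + 1)) * X := by
        rw [pow_succ' A m, pow_succ X (m + 1)]
        noncomm_ring
      rw [this, ih, hc, hXX]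
  -- A^l * X * A = A^l
  have hQ : A ^ l * X * A = A ^ l := by
    have hl : A ^ l = A ^ (l - k) * A ^ k := by
      rw [← pow_add]; congr 1; omega
    rw [hl, mul_assoc, mul_assoc, ← mul_assoc (A ^ k), hk]
  -- A^(2l+1) * X^(l+1) = A^l
  have hR : A ^ (2 * l + 1) * X ^ (l + 1) = A ^ l := by
    have h1 : A ^ (2 * l + 1) = A ^ l * A * A ^ l := by
      rw [← pow_succ, ← pow_add]; congr 1; omega
    calc A ^ (2 * l + 1) * X ^ (l + 1)
        = A ^ l * A * (A ^ l * X ^ (l + 1)) := by rw [h1]; noncomm_ring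
      _ = A ^ l * A * X := by rw [hP l]
      _ = A ^ l * X * A := by rw [mul_assoc, hc, ← mul_assoc]
      _ = A ^ l := hQ
  -- X^(l+1) * A^(2l+1) = A^l
  have hL : X ^ (l + 1) * A ^ (2 * l + 1) = A ^ l := by
    rw [← (c.pow_pow (2 * l + 1) (l + 1)).eq, hR]
  calc X = A ^ l * X ^ (l + 1) := (hP l).symm
    _ = (X ^ (l + 1) * A ^ (2 * l + 1)) * X ^ (l + 1) := by rw [hL]
    _ = X ^ (l + 1) * (A ^ (2 * l + 1) * Z * A ^ (2 * l + 1)) * X ^ (l + 1) := by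
        rw [hB]
    _ = (X ^ (l + 1) * A ^ (2 * l + 1)) * Z * (A ^ (2 * l + 1) * X ^ (l + 1)) := by
        noncomm_ring
    _ = A ^ l * Z * A ^ l := by rw [hL, hR]
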